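/- arXiv:1102.2566 — 2 statements merged into one kernel-verified Lean document; each statement's English description precedes it below -/
import Mathlib

section
/- Let m, n be positive integers, let α₁, …, αₙ be pairwise distinct elements of the field F = GF(2^m), and let G ∈ F[X] be a nonconstant square-free polynomial of degree r with G(αᵢ) ≠ 0 for all i. Then every nonzero codeword of the binary Goppa code Γ(L,G) has Hamming weight at least 2r + 1; that is, Γ(L,G) has minimum distance at least 2·deg G + 1 (its designed minimum distance as a Goppa code with polynomial G²). -/
/-!
Let `S` be the support of `c` and `f = ∏_{i ∈ S} (X - αᵢ)`. The syndrome is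
`(∏_{j ∉ S} (X - αⱼ)) · f'`, and `G` is coprime to the first factor, so `G ∣ f'`.
In characteristic 2 every second derivative vanishes, so `f'` has zero derivative and is
therefore a square `u²` over the perfect field `GF(2^m)`; as `G` is square-free, `G ∣ u`.
Because `f` is separable, `f' ≠ 0`, whence `2 deg G ≤ 2 deg u = deg f' < deg f = |S|`.
-/

open Polynomial

/-- The "syndrome" polynomial `Σᵢ cᵢ · ∏_{j ≠ i} (X - αⱼ)` associated to a binary word
`c ∈ (F₂)ⁿ` and a support `α : Fin n → GF(2^m)`, with the coordinates of `c` viewed in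
`GF(2^m)` via the inclusion `F₂ ⊆ GF(2^m)`.  A word `c` belongs to the binary Goppa code
`Γ(L, G)` iff `G` divides this polynomial. -/
noncomputable def goppaSyndrome {m n : ℕ} (α : Fin n → GaloisField 2 m)
    (c : Fin n → ZMod 2) : Polynomial (GaloisField 2 m) :=
  ∑ i, algebraMap (ZMod 2) (GaloisField 2 m) (c i) •
    ∏ j ∈ Finset.univ \ {i}, (X - C (α j))

namespace Polynomial

theorem iterate_derivative_eq_zero_of_charP {R : Type*} [Semiring R] (p : ℕ) [CharP R p]
    (hp : p ≠ 0) (f : R[X]) : derivative^[p] f = 0 := by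
  ext m
  have hdvd : p ∣ (m + p).descFactorial p :=
    (Nat.dvd_factorial (Nat.pos_of_ne_zero hp) le_rfl).trans (Nat.factorial_dvd_descFactorial _ _)
  rw [coeff_iterate_derivative, nsmul_eq_mul, (CharP.cast_eq_zero_iff R p _).mpr hdvd, zero_mul,
    coeff_zero]

theorem exists_eq_pow_of_derivative_eq_zero {R : Type*} [CommSemiring R] [NoZeroDivisors R]
    (p : ℕ) [ExpChar R p] [PerfectRing R p] {f : R[X]} (hf : derivative f = 0) :
    ∃ g : R[X], f = g ^ p := by
  refine ⟨(contract p f).map (frobeniusEquiv R p).symm, ?_⟩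
  rw [← map_frobenius_expand, map_expand, map_map, frobenius_comp_frobeniusEquiv_symm, map_id,
    expand_contract' p hf]

theorem two_mul_natDegree_lt_of_squarefree_dvd_derivative {K : Type*} [Field K] [CharP K 2]
    [PerfectRing K 2] {G f : K[X]} (hG : Squarefree G) (hf : derivative f ≠ 0)
    (hdvd : G ∣ derivative f) : 2 * G.natDegree < f.natDegree := by
  obtain ⟨u, hu⟩ := exists_eq_pow_of_derivative_eq_zero 2
    (iterate_derivative_eq_zero_of_charP 2 two_ne_zero f)
  rw [hu] at hf hdvd
  have hGu : G.natDegree ≤ u.natDegree :=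
    natDegree_le_of_dvd ((hG.dvd_pow_iff_dvd two_ne_zero).mp hdvd)
      ((pow_ne_zero_iff two_ne_zero).mp hf)
  have hlt : (u ^ 2).natDegree < f.natDegree :=
    hu ▸ natDegree_derivative_lt fun h => hf (hu ▸ derivative_of_natDegree_zero h)
  rw [natDegree_pow] at hlt
  omega

theorem prod_sdiff_mul_derivative_prod {R ι : Type*} [CommSemiring R] [DecidableEq ι]
    {s t : Finset ι} (hst : s ⊆ t) (g : ι → R[X]) :
    (∏ j ∈ t \ s, g j) * derivative (∏ i ∈ s, g i) =
      ∑ i ∈ s, (∏ j ∈ t.erase i, g j) * derivative (g i) := by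
  rw [derivative_prod_finset, Finset.mul_sum]
  refine Finset.sum_congr rfl fun i hi => ?_
  rw [← mul_assoc, ← Finset.prod_sdiff (Finset.erase_subset_erase i hst),
    ← Finset.erase_sdiff_distrib, Finset.erase_eq_of_notMem fun h => (Finset.mem_sdiff.mp h).2 hi]

theorem isCoprime_prod_X_sub_C_of_eval_ne_zero {K ι : Type*} [Field K] {G : K[X]}
    {s : Finset ι} {a : ι → K} (h : ∀ i ∈ s, G.eval (a i) ≠ 0) :
    IsCoprime G (∏ i ∈ s, (X - C (a i))) :=
  IsCoprime.prod_right fun i hi => ((irreducible_X_sub_C (a i)).coprime_iff_not_dvd.mpr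
    fun hdvd => h i hi (dvd_iff_isRoot.mp hdvd)).symm

theorem derivative_prod_X_sub_C_ne_zero {K ι : Type*} [Field K] {s : Finset ι} {a : ι → K}
    (ha : Set.InjOn a s) (hs : s.Nonempty) : derivative (∏ i ∈ s, (X - C (a i))) ≠ 0 := by
  obtain ⟨i, hi⟩ := hs
  have hsep : (∏ i ∈ s, (X - C (a i))).Separable :=
    separable_prod_X_sub_C_iff'.mpr fun x hx y hy hxy => ha hx hy hxy
  have hroot : (∏ i ∈ s, (X - C (a i))).IsRoot (a i) := by
    simp [eval_prod, Finset.prod_eq_zero hi]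
  exact fun h0 => hsep.eval₂_derivative_ne_zero (RingHom.id K) hroot (by rw [h0, eval₂_zero])

end Polynomial

theorem goppaSyndrome_eq_mul_derivative {m n : ℕ} (α : Fin n → GaloisField 2 m)
    (c : Fin n → ZMod 2) :
    goppaSyndrome α c = (∏ j ∈ Finset.univ \ Finset.univ.filter (c · ≠ 0), (X - C (α j))) *
      derivative (∏ i ∈ Finset.univ.filter (c · ≠ 0), (X - C (α i))) := by
  rw [prod_sdiff_mul_derivative_prod (Finset.subset_univ _), goppaSyndrome,
    Finset.sum_filter]
  refine Finset.sum_congr rfl fun i _ => ?_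
  rw [derivative_X_sub_C, mul_one, Finset.sdiff_singleton_eq_erase]
  rcases (by decide : ∀ b : ZMod 2, b = 0 ∨ b = 1) (c i) with h | h <;> simp [h]

theorem goppa_code_squarefree_min_weight_general (m n : ℕ)
    (α : Fin n → GaloisField 2 m) (hα : Function.Injective α)
    (G : Polynomial (GaloisField 2 m)) (hsq : Squarefree G)
    (hroots : ∀ i, G.eval (α i) ≠ 0) (c : Fin n → ZMod 2)
    (hc : c ≠ 0) (hcode : G ∣ goppaSyndrome α c) :
    2 * G.natDegree + 1 ≤ hammingNorm c := by
  set S : Finset (Fin n) := Finset.univ.filter (c · ≠ 0)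
  have hS : S.Nonempty := by
    obtain ⟨i, hi⟩ := Function.ne_iff.mp hc
    exact ⟨i, Finset.mem_filter.mpr ⟨Finset.mem_univ i, hi⟩⟩
  rw [goppaSyndrome_eq_mul_derivative] at hcode
  have hdvd : G ∣ derivative (∏ i ∈ S, (X - C (α i))) :=
    (isCoprime_prod_X_sub_C_of_eval_ne_zero fun j _ => hroots j).dvd_of_dvd_mul_left hcode
  have hlt := two_mul_natDegree_lt_of_squarefree_dvd_derivative hsq
    (derivative_prod_X_sub_C_ne_zero hα.injOn hS) hdvd
  rwa [natDegree_finsetProd_X_sub_C_eq_card] at hlt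

/-- For a nonconstant square-free Goppa polynomial `G` of degree `r`, every nonzero codeword
of the binary Goppa code `Γ(L, G)` has Hamming weight at least `2r + 1`. -/
theorem goppa_code_squarefree_min_weight (m n : ℕ) (hm : 0 < m) (hn : 0 < n)
    (α : Fin n → GaloisField 2 m) (hα : Function.Injective α)
    (G : Polynomial (GaloisField 2 m)) (hsq : Squarefree G) (hdeg : 0 < G.natDegree)
    (hroots : ∀ i, G.eval (α i) ≠ 0) (c : Fin n → ZMod 2)
    (hc : c ≠ 0) (hcode : G ∣ goppaSyndrome α c) :
    2 * G.natDegree + 1 ≤ hammingNorm c :=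
  goppa_code_squarefree_min_weight_general m n α hα G hsq hroots c hc hcode
end

section
/- Let m, n be positive integers, let α₁, …, αₙ be pairwise distinct elements of the field F = GF(2^m), and let G ∈ F[X] be a nonconstant square-free polynomial of degree r with G(αᵢ) ≠ 0 for all i. Then the binary Goppa code Γ(L,G²), viewed as an F₂-linear subspace of (F₂)ⁿ, has dimension at least n − m·r (rather than only the generic bound n − 2m·r for a Goppa polynomial of degree 2r). -/
/-!
Write `S` for the support of `c` and `f_S = ∏_{i ∈ S} (X - αᵢ)`. Then
`Σ_{i ∈ S} ∏_{j ≠ i} (X - αⱼ) = (∏_{j ∉ S} (X - αⱼ)) · f_S'`, and the first factor is coprime to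
`G` because `G(αⱼ) ≠ 0`, so `c ∈ Γ(L, G)` iff `G ∣ f_S'`. In characteristic 2 the second derivative
vanishes, so over a perfect field `f_S'` is a square; a square-free `G` dividing a square `b²`
divides `b`, hence `G² ∣ b²`. Thus `Γ(L, G²) = Γ(L, G)`, and the generic bound `n - m·deg G` for
`Γ(L, G)` (rank–nullity, `F[X]/(G)` having `F₂`-dimension `m·deg G`) applies.
-/

open Polynomial

/-- The binary Goppa code `Γ(L, G)` with support `α : Fin n → GF(2^m)` and Goppa polynomial
`G`, as an `F₂`-linear subspace of `(F₂)ⁿ`.  It is the kernel of the `F₂`-linear map sending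
`c ∈ (F₂)ⁿ` to the class of `Σᵢ cᵢ · ∏_{j ≠ i} (X - αⱼ)` modulo `G`; thus `c ∈ Γ(L, G)` iff
`G` divides `Σᵢ cᵢ · ∏_{j ≠ i} (X - αⱼ)` in `GF(2^m)[X]`. -/
noncomputable def goppaCode {m n : ℕ} (α : Fin n → GaloisField 2 m)
    (G : Polynomial (GaloisField 2 m)) : Submodule (ZMod 2) (Fin n → ZMod 2) :=
  LinearMap.ker
    ((Ideal.Quotient.mkₐ (ZMod 2) (Ideal.span {G})).toLinearMap.comp
      (Fintype.linearCombination (ZMod 2)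
        (fun i => ∏ j ∈ Finset.univ \ {i}, (X - C (α j)))))

open Finset

namespace Polynomial

theorem derivative_derivative_eq_zero {R : Type*} [CommRing R] [CharP R 2] (f : R[X]) :
    derivative (derivative f) = 0 := by
  have := iterate_derivative_eq_factorial_smul_sum f 2
  rwa [Nat.factorial_two, CharTwo.two_nsmul] at this

theorem isSquare_derivative {R : Type*} [CommRing R] [NoZeroDivisors R] [CharP R 2]
    [PerfectRing R 2] (f : R[X]) : IsSquare (derivative f) :=
  ⟨(contract 2 (derivative f)).map (frobeniusEquiv R 2).symm, by
    rw [← sq, ← polynomial_expand_eq,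
      expand_contract 2 (derivative_derivative_eq_zero f) two_ne_zero]⟩

theorem sum_prod_sdiff_singleton_X_sub_C {ι R : Type*} [Fintype ι] [DecidableEq ι] [CommRing R]
    (α : ι → R) (S : Finset ι) :
    ∑ i ∈ S, ∏ j ∈ univ \ {i}, (X - C (α j)) =
      (∏ j ∈ Sᶜ, (X - C (α j))) * derivative (∏ j ∈ S, (X - C (α j))) := by
  simp only [derivative_prod_finset, derivative_X_sub_C, mul_one, mul_sum]
  refine sum_congr rfl fun i hi => ?_
  rw [← prod_union (disjoint_compl_left.mono_right (erase_subset _ _))]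
  congr 1
  ext j
  by_cases hj : j ∈ S <;> by_cases hji : j = i <;> simp_all

theorem isCoprime_prod_X_sub_C {ι K : Type*} [Field K] {G : K[X]} {α : ι → K} (T : Finset ι)
    (hroots : ∀ i ∈ T, G.eval (α i) ≠ 0) : IsCoprime G (∏ j ∈ T, (X - C (α j))) :=
  IsCoprime.prod_right fun j hj =>
    ((irreducible_X_sub_C (α j)).coprime_iff_not_dvd.2 (by rw [dvd_iff_isRoot]; exact hroots j hj)).symm

end Polynomial

theorem Squarefree.sq_dvd_iff_dvd_of_isSquare {R : Type*} [CommMonoidWithZero R]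
    [DecompositionMonoid R] {x a : R} (hx : Squarefree x) (ha : IsSquare a) :
    x ^ 2 ∣ a ↔ x ∣ a := by
  obtain ⟨b, rfl⟩ := ha
  rw [← sq, hx.dvd_pow_iff_dvd two_ne_zero]
  exact ⟨fun h => (hx.dvd_pow_iff_dvd two_ne_zero).1 ((dvd_pow_self x two_ne_zero).trans h),
    (pow_dvd_pow_of_dvd · 2)⟩

theorem finrank_quotient_span_singleton {k K : Type*} [Field k] [Field K] [Algebra k K]
    (G : K[X]) : Module.finrank k (K[X] ⧸ Ideal.span {G}) = Module.finrank k K * G.natDegree := by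
  rw [← Module.finrank_mul_finrank k K, finrank_quotient_span_eq_natDegree]

theorem LinearMap.finrank_sub_finrank_le_finrank_ker {k V W : Type*} [DivisionRing k]
    [AddCommGroup V] [Module k V] [AddCommGroup W] [Module k W] [FiniteDimensional k V]
    [FiniteDimensional k W] (f : V →ₗ[k] W) :
    Module.finrank k V - Module.finrank k W ≤ Module.finrank k (LinearMap.ker f) := by
  have := f.finrank_range_add_finrank_ker
  have := (LinearMap.range f).finrank_le
  omega

section GoppaCode

variable {m n : ℕ} (α : Fin n → GaloisField 2 m)

theorem mem_goppaCode_iff (G : (GaloisField 2 m)[X]) (c : Fin n → ZMod 2) :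
    c ∈ goppaCode α G ↔ G ∣ ∑ i ∈ univ.filter (c · = 1), ∏ j ∈ univ \ {i}, (X - C (α j)) := by
  rw [goppaCode, LinearMap.mem_ker, LinearMap.comp_apply, AlgHom.toLinearMap_apply,
    Ideal.Quotient.mkₐ_eq_mk, Ideal.Quotient.eq_zero_iff_mem, Ideal.mem_span_singleton,
    Fintype.linearCombination_apply, sum_filter]
  refine Iff.of_eq (congrArg _ (sum_congr rfl fun i _ => ?_))
  rcases (by decide : ∀ x : ZMod 2, x = 0 ∨ x = 1) (c i) with h | h <;> simp [h]

theorem mem_goppaCode_iff_dvd_derivative {G : (GaloisField 2 m)[X]}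
    (hroots : ∀ i, G.eval (α i) ≠ 0) (c : Fin n → ZMod 2) :
    c ∈ goppaCode α G ↔ G ∣ derivative (∏ j ∈ univ.filter (c · = 1), (X - C (α j))) := by
  rw [mem_goppaCode_iff, sum_prod_sdiff_singleton_X_sub_C]
  exact ⟨(isCoprime_prod_X_sub_C _ fun i _ => hroots i).dvd_of_dvd_mul_left,
    fun h => h.mul_left _⟩

theorem goppaCode_sq_eq {G : (GaloisField 2 m)[X]} (hsq : Squarefree G)
    (hroots : ∀ i, G.eval (α i) ≠ 0) : goppaCode α (G ^ 2) = goppaCode α G := by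
  have hroots_sq : ∀ i, (G ^ 2).eval (α i) ≠ 0 := fun i => by
    simpa only [eval_pow] using pow_ne_zero 2 (hroots i)
  ext c
  rw [mem_goppaCode_iff_dvd_derivative α hroots_sq, mem_goppaCode_iff_dvd_derivative α hroots]
  exact hsq.sq_dvd_iff_dvd_of_isSquare (isSquare_derivative _)

theorem sub_mul_natDegree_le_finrank_goppaCode (hm : m ≠ 0) {G : (GaloisField 2 m)[X]}
    (hG : G ≠ 0) : n - m * G.natDegree ≤ Module.finrank (ZMod 2) (goppaCode α G) := by
  have : Module.Finite (GaloisField 2 m) ((GaloisField 2 m)[X] ⧸ Ideal.span {G}) :=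
    (AdjoinRoot.powerBasis hG).finite
  have : Module.Finite (ZMod 2) ((GaloisField 2 m)[X] ⧸ Ideal.span {G}) :=
    Module.Finite.trans (GaloisField 2 m) _
  have := LinearMap.finrank_sub_finrank_le_finrank_ker
    ((Ideal.Quotient.mkₐ (ZMod 2) (Ideal.span {G})).toLinearMap.comp
      (Fintype.linearCombination (ZMod 2) fun i => ∏ j ∈ univ \ {i}, (X - C (α j))))
  rwa [Module.finrank_fin_fun, finrank_quotient_span_singleton, GaloisField.finrank 2 hm] at this

end GoppaCode

theorem goppa_code_sq_dimension_general (m n : ℕ) (hm : 0 < m)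
    (α : Fin n → GaloisField 2 m)
    (G : Polynomial (GaloisField 2 m)) (hsq : Squarefree G) (hdeg : 0 < G.natDegree)
    (hroots : ∀ i, G.eval (α i) ≠ 0) :
    n - m * G.natDegree ≤ Module.finrank (ZMod 2) (goppaCode α (G ^ 2)) := by
  rw [goppaCode_sq_eq α hsq hroots]
  exact sub_mul_natDegree_le_finrank_goppaCode α hm.ne' (ne_zero_of_natDegree_gt hdeg)

/-- For a nonconstant square-free `G` of degree `r`, the binary Goppa code `Γ(L, G²)` has
`F₂`-dimension at least `n - m·r` (not merely the generic bound `n - 2·m·r`). -/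
theorem goppa_code_sq_dimension (m n : ℕ) (hm : 0 < m) (hn : 0 < n)
    (α : Fin n → GaloisField 2 m) (hα : Function.Injective α)
    (G : Polynomial (GaloisField 2 m)) (hsq : Squarefree G) (hdeg : 0 < G.natDegree)
    (hroots : ∀ i, G.eval (α i) ≠ 0) :
    n - m * G.natDegree ≤ Module.finrank (ZMod 2) (goppaCode α (G ^ 2)) :=
  goppa_code_sq_dimension_general m n hm α G hsq hdeg hroots
end
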